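/- arXiv:1609.09031 — 7 statements merged into one kernel-verified Lean document; each statement's English description precedes it below -/
import Mathlib

section
/- For any finite sequence of closed unit intervals presented online whose clique number ω is at least 2, the total number of colors used by the Kierstead–Trotter algorithm is at most 3ω − 3. -/
open Set

/-- `ℓ` is the Kierstead–Trotter level function for the online sequence of
intervals `I 0, I 1, …, I (n-1)`: `ℓ i` is the least positive integer `j`
such that every point `x ∈ I i` lies in at most `j - 1` earlier intervals of
level at most `j`. -/
def IsKTLevel {n : ℕ} (I : Fin n → Set ℝ) (ℓ : Fin n → ℕ) : Prop :=
  ∀ i : Fin n,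
    IsLeast { j : ℕ | 1 ≤ j ∧ ∀ x ∈ I i,
      Set.ncard { k : Fin n | k < i ∧ x ∈ I k ∧ ℓ k ≤ j } ≤ j - 1 } (ℓ i)

/-- `c` is the First-Fit coloring within each level: `c i` is the least
positive integer different from `c k` for every earlier `k` with the same
level whose interval intersects `I i`. -/
def IsKTFirstFit {n : ℕ} (I : Fin n → Set ℝ) (ℓ c : Fin n → ℕ) : Prop :=
  ∀ i : Fin n,
    IsLeast { m : ℕ | 1 ≤ m ∧ ∀ k : Fin n, k < i → ℓ k = ℓ i →
      (I k ∩ I i).Nonempty → c k ≠ m } (c i)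

/-- The number of distinct First-Fit colors used at level `j`. -/
def colorsAtLevel {n : ℕ} (ℓ c : Fin n → ℕ) (j : ℕ) : ℕ :=
  ((Finset.univ.filter (fun i : Fin n => ℓ i = j)).image c).card

/-- The total number of colors used by the Kierstead–Trotter algorithm:
colors at distinct levels come from pairwise disjoint palettes, so this is
the number of distinct (level, color) pairs used, i.e. the sum over levels
of the number of distinct First-Fit colors used at that level. -/
def totalColors {n : ℕ} (ℓ c : Fin n → ℕ) : ℕ :=
  (Finset.univ.image (fun i : Fin n => (ℓ i, c i))).card

/-- The clique number of the sequence of intervals: the maximum over points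
`x ∈ ℝ` of the number of indices `i` with `x ∈ I i`. -/
noncomputable def cliqueNum {n : ℕ} (I : Fin n → Set ℝ) : ℕ :=
  sSup { m : ℕ | ∃ x : ℝ, m = Set.ncard { i : Fin n | x ∈ I i } }

section KTAux

variable {n : ℕ} {a : Fin n → ℝ} {ℓ c : Fin n → ℕ}

lemma KT.level_pos (hℓ : IsKTLevel (fun i => Icc (a i) (a i + 1)) ℓ) (i : Fin n) :
    1 ≤ ℓ i := (hℓ i).1.1

lemma KT.level_prop (hℓ : IsKTLevel (fun i => Icc (a i) (a i + 1)) ℓ) (i : Fin n)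
    {x : ℝ} (hx : x ∈ Icc (a i) (a i + 1)) :
    Set.ncard { k : Fin n | k < i ∧ x ∈ Icc (a k) (a k + 1) ∧ ℓ k ≤ ℓ i } ≤ ℓ i - 1 :=
  (hℓ i).1.2 x hx

/-- The "guilty point" witnessing that level `ℓ i - 1` failed. -/
lemma KT.guilty (hℓ : IsKTLevel (fun i => Icc (a i) (a i + 1)) ℓ) (i : Fin n)
    (h2 : 2 ≤ ℓ i) :
    ∃ q ∈ Icc (a i) (a i + 1),
      ℓ i - 1 ≤ Set.ncard { k : Fin n | k < i ∧ q ∈ Icc (a k) (a k + 1) ∧ ℓ k ≤ ℓ i - 1 } := by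
  by_contra hcon
  push_neg at hcon
  have hmem : (ℓ i - 1) ∈ { j : ℕ | 1 ≤ j ∧ ∀ x ∈ Icc (a i) (a i + 1),
      Set.ncard { k : Fin n | k < i ∧ x ∈ Icc (a k) (a k + 1) ∧ ℓ k ≤ j } ≤ j - 1 } := by
    refine ⟨by omega, fun x hx => ?_⟩
    have := hcon x hx
    omega
  have := (hℓ i).2 hmem
  omega

/-- The guilty point of `v` lies in no other interval of the same level. -/
lemma KT.excl (hℓ : IsKTLevel (fun i => Icc (a i) (a i + 1)) ℓ) {v w : Fin n}
    (hne : v ≠ w) (hlw : ℓ w = ℓ v) (h2 : 2 ≤ ℓ v) {q : ℝ}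
    (hq : q ∈ Icc (a v) (a v + 1))
    (hB : ℓ v - 1 ≤ Set.ncard { k : Fin n | k < v ∧ q ∈ Icc (a k) (a k + 1) ∧ ℓ k ≤ ℓ v - 1 }) :
    q ∉ Icc (a w) (a w + 1) := by
  intro hqw
  rcases hne.lt_or_gt with hvw | hwv
  · -- v < w : contradict the level property of w at q
    have hnotmem : v ∉ { k : Fin n | k < v ∧ q ∈ Icc (a k) (a k + 1) ∧ ℓ k ≤ ℓ v - 1 } :=
      fun h => absurd h.1 (lt_irrefl v)
    have hsub : insert v { k : Fin n | k < v ∧ q ∈ Icc (a k) (a k + 1) ∧ ℓ k ≤ ℓ v - 1 } ⊆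
        { k : Fin n | k < w ∧ q ∈ Icc (a k) (a k + 1) ∧ ℓ k ≤ ℓ w } := by
      rintro k (rfl | hk)
      · exact ⟨hvw, hq, by omega⟩
      · obtain ⟨hk1, hk2, hk3⟩ := hk
        exact ⟨hk1.trans hvw, hk2, by omega⟩
    have h1 : Set.ncard { k : Fin n | k < v ∧ q ∈ Icc (a k) (a k + 1) ∧ ℓ k ≤ ℓ v - 1 } + 1 ≤
        Set.ncard { k : Fin n | k < w ∧ q ∈ Icc (a k) (a k + 1) ∧ ℓ k ≤ ℓ w } := by
      rw [← Set.ncard_insert_of_notMem hnotmem]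
      exact Set.ncard_le_ncard hsub (Set.toFinite _)
    have h2' := KT.level_prop hℓ w hqw
    omega
  · -- w < v : contradict the level property of v at q
    have hnotmem : w ∉ { k : Fin n | k < v ∧ q ∈ Icc (a k) (a k + 1) ∧ ℓ k ≤ ℓ v - 1 } :=
      fun h => by have := h.2.2; omega
    have hsub : insert w { k : Fin n | k < v ∧ q ∈ Icc (a k) (a k + 1) ∧ ℓ k ≤ ℓ v - 1 } ⊆
        { k : Fin n | k < v ∧ q ∈ Icc (a k) (a k + 1) ∧ ℓ k ≤ ℓ v } := by
      rintro k (rfl | hk)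
      · exact ⟨hwv, hqw, by omega⟩
      · obtain ⟨hk1, hk2, hk3⟩ := hk
        exact ⟨hk1, hk2, by omega⟩
    have h1 : Set.ncard { k : Fin n | k < v ∧ q ∈ Icc (a k) (a k + 1) ∧ ℓ k ≤ ℓ v - 1 } + 1 ≤
        Set.ncard { k : Fin n | k < v ∧ q ∈ Icc (a k) (a k + 1) ∧ ℓ k ≤ ℓ v } := by
      rw [← Set.ncard_insert_of_notMem hnotmem]
      exact Set.ncard_le_ncard hsub (Set.toFinite _)
    have h2' := KT.level_prop hℓ v hq
    omega

/-- A middle interval (by position) of three same-level pairwise meeting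
intervals is covered by the union of the other two: contradiction via its
guilty point. -/
lemma KT.mid3 (hℓ : IsKTLevel (fun i => Icc (a i) (a i + 1)) ℓ) {o1 v o2 : Fin n}
    (h1 : o1 ≠ v) (h2 : o2 ≠ v) (hl1 : ℓ o1 = ℓ v) (hl2 : ℓ o2 = ℓ v) (hv2 : 2 ≤ ℓ v)
    (hp1 : a o1 ≤ a v) (hp2 : a v ≤ a o2) {p : ℝ}
    (hpo1 : p ∈ Icc (a o1) (a o1 + 1)) (hpo2 : p ∈ Icc (a o2) (a o2 + 1)) : False := by
  obtain ⟨q, hq, hB⟩ := KT.guilty hℓ v hv2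
  have hn1 : q ∉ Icc (a o1) (a o1 + 1) := KT.excl hℓ (Ne.symm h1) hl1 hv2 hq hB
  have hn2 : q ∉ Icc (a o2) (a o2 + 1) := KT.excl hℓ (Ne.symm h2) hl2 hv2 hq hB
  rw [Set.mem_Icc] at hq hpo1 hpo2
  rcases le_or_gt q (a o1 + 1) with h | h
  · exact hn1 (Set.mem_Icc.mpr ⟨hp1.trans hq.1, h⟩)
  · refine hn2 (Set.mem_Icc.mpr ⟨?_, ?_⟩)
    · linarith [hpo1.2, hpo2.1]
    · linarith [hq.2]

/-- No point lies in three distinct intervals of the same level. -/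
lemma KT.no3 (hℓ : IsKTLevel (fun i => Icc (a i) (a i + 1)) ℓ) {u v w : Fin n}
    (huv : u ≠ v) (huw : u ≠ w) (hvw : v ≠ w)
    (hl1 : ℓ v = ℓ u) (hl2 : ℓ w = ℓ u) {p : ℝ}
    (hu : p ∈ Icc (a u) (a u + 1)) (hv : p ∈ Icc (a v) (a v + 1))
    (hw : p ∈ Icc (a w) (a w + 1)) : False := by
  rcases le_or_gt 2 (ℓ u) with h2 | hsmall
  · rcases le_total (a u) (a v) with h12 | h12 <;> rcases le_total (a v) (a w) with h23 | h23 <;>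
      rcases le_total (a u) (a w) with h13 | h13
    · exact KT.mid3 hℓ huv (Ne.symm hvw) (by omega) (by omega) (by omega) h12 h23 hu hw
    · exact KT.mid3 hℓ huv (Ne.symm hvw) (by omega) (by omega) (by omega) h12 h23 hu hw
    · exact KT.mid3 hℓ huw hvw (by omega) (by omega) (by omega) h13 h23 hu hv
    · exact KT.mid3 hℓ (Ne.symm huw) (Ne.symm huv) (by omega) (by omega) (by omega) h13 h12 hw hv
    · exact KT.mid3 hℓ (Ne.symm huv) (Ne.symm huw) (by omega) (by omega) (by omega) h12 h13 hv hw
    · exact KT.mid3 hℓ hvw huw (by omega) (by omega) (by omega) h23 h13 hv hu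
    · exact KT.mid3 hℓ (Ne.symm hvw) huv (by omega) (by omega) (by omega) h23 h12 hw hu
    · exact KT.mid3 hℓ (Ne.symm hvw) huv (by omega) (by omega) (by omega) h23 h12 hw hu
  · -- level 1: even two intervals sharing a point are impossible
    have hu1 : ℓ u = 1 := by have := KT.level_pos hℓ u; omega
    rcases huv.lt_or_gt with hlt | hlt
    · have hmem : u ∈ { k : Fin n | k < v ∧ p ∈ Icc (a k) (a k + 1) ∧ ℓ k ≤ ℓ v } :=
        ⟨hlt, hu, by omega⟩
      have hpos : 0 < Set.ncard { k : Fin n | k < v ∧ p ∈ Icc (a k) (a k + 1) ∧ ℓ k ≤ ℓ v } :=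
        (Set.ncard_pos (Set.toFinite _)).mpr ⟨u, hmem⟩
      have := KT.level_prop hℓ v hv
      omega
    · have hmem : v ∈ { k : Fin n | k < u ∧ p ∈ Icc (a k) (a k + 1) ∧ ℓ k ≤ ℓ u } :=
        ⟨hlt, hv, by omega⟩
      have hpos : 0 < Set.ncard { k : Fin n | k < u ∧ p ∈ Icc (a k) (a k + 1) ∧ ℓ k ≤ ℓ u } :=
        (Set.ncard_pos (Set.toFinite _)).mpr ⟨v, hmem⟩
      have := KT.level_prop hℓ u hu
      omega

/-- Two distinct earlier same-level neighbours of `i` cannot contain a common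
point of `I i`. -/
lemma KT.pair_pt (hℓ : IsKTLevel (fun i => Icc (a i) (a i + 1)) ℓ) {i k1 k2 : Fin n}
    (h1 : k1 < i) (h2 : k2 < i) (hne : k1 ≠ k2)
    (hl1 : ℓ k1 = ℓ i) (hl2 : ℓ k2 = ℓ i) {x : ℝ}
    (hx1 : x ∈ Icc (a k1) (a k1 + 1)) (hx2 : x ∈ Icc (a k2) (a k2 + 1))
    (hxi : x ∈ Icc (a i) (a i + 1)) : False :=
  KT.no3 hℓ hne (Fin.ne_of_lt h1) (Fin.ne_of_lt h2) (hl2.trans hl1.symm) (hl1.symm)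
    hx1 hx2 hxi

/-- A neighbour of `I i` contains one of the endpoints of `I i`. -/
lemma KT.nbr_pt {k i : Fin n}
    (h : (Icc (a k) (a k + 1) ∩ Icc (a i) (a i + 1)).Nonempty) :
    a i ∈ Icc (a k) (a k + 1) ∨ a i + 1 ∈ Icc (a k) (a k + 1) := by
  obtain ⟨t, htk, hti⟩ := h
  rw [Set.mem_Icc] at htk hti
  rcases le_total (a k) (a i) with h' | h'
  · exact Or.inl (Set.mem_Icc.mpr ⟨h', le_trans hti.1 htk.2⟩)
  · exact Or.inr (Set.mem_Icc.mpr ⟨le_trans htk.1 hti.2, by linarith⟩)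

lemma KT.ff_wit (hc : IsKTFirstFit (fun i => Icc (a i) (a i + 1)) ℓ c) (i : Fin n)
    {m : ℕ} (hm1 : 1 ≤ m) (hm : m < c i) :
    ∃ k : Fin n, k < i ∧ ℓ k = ℓ i ∧
      (Icc (a k) (a k + 1) ∩ Icc (a i) (a i + 1)).Nonempty ∧ c k = m := by
  by_contra hcon
  push_neg at hcon
  have hmem : m ∈ { m' : ℕ | 1 ≤ m' ∧ ∀ k : Fin n, k < i → ℓ k = ℓ i →
      (Icc (a k) (a k + 1) ∩ Icc (a i) (a i + 1)).Nonempty → c k ≠ m' } :=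
    ⟨hm1, fun k hk hkl hkn => hcon k hk hkl hkn⟩
  have := (hc i).2 hmem
  omega

lemma KT.c_pos (hc : IsKTFirstFit (fun i => Icc (a i) (a i + 1)) ℓ c) (i : Fin n) :
    1 ≤ c i := (hc i).1.1

lemma KT.c_le_three (hℓ : IsKTLevel (fun i => Icc (a i) (a i + 1)) ℓ)
    (hc : IsKTFirstFit (fun i => Icc (a i) (a i + 1)) ℓ c) (i : Fin n) : c i ≤ 3 := by
  by_contra hgt
  push_neg at hgt
  obtain ⟨k1, hlt1, hll1, hn1, hc1⟩ := KT.ff_wit hc i (le_refl 1) (by omega)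
  obtain ⟨k2, hlt2, hll2, hn2, hc2⟩ := KT.ff_wit hc i (by omega : (1:ℕ) ≤ 2) (by omega)
  obtain ⟨k3, hlt3, hll3, hn3, hc3⟩ := KT.ff_wit hc i (by omega : (1:ℕ) ≤ 3) (by omega)
  have d12 : k1 ≠ k2 := fun h => by rw [h] at hc1; omega
  have d13 : k1 ≠ k3 := fun h => by rw [h] at hc1; omega
  have d23 : k2 ≠ k3 := fun h => by rw [h] at hc2; omega
  have hai : a i ∈ Icc (a i) (a i + 1) := Set.mem_Icc.mpr ⟨le_refl _, by linarith⟩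
  have hai1 : a i + 1 ∈ Icc (a i) (a i + 1) := Set.mem_Icc.mpr ⟨by linarith, le_refl _⟩
  rcases KT.nbr_pt hn1 with e1 | e1 <;> rcases KT.nbr_pt hn2 with e2 | e2 <;>
    rcases KT.nbr_pt hn3 with e3 | e3
  · exact KT.pair_pt hℓ hlt1 hlt2 d12 hll1 hll2 e1 e2 hai
  · exact KT.pair_pt hℓ hlt1 hlt2 d12 hll1 hll2 e1 e2 hai
  · exact KT.pair_pt hℓ hlt1 hlt3 d13 hll1 hll3 e1 e3 hai
  · exact KT.pair_pt hℓ hlt2 hlt3 d23 hll2 hll3 e2 e3 hai1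
  · exact KT.pair_pt hℓ hlt2 hlt3 d23 hll2 hll3 e2 e3 hai
  · exact KT.pair_pt hℓ hlt1 hlt3 d13 hll1 hll3 e1 e3 hai1
  · exact KT.pair_pt hℓ hlt1 hlt2 d12 hll1 hll2 e1 e2 hai1
  · exact KT.pair_pt hℓ hlt1 hlt2 d12 hll1 hll2 e1 e2 hai1

lemma KT.c_level_two (hℓ : IsKTLevel (fun i => Icc (a i) (a i + 1)) ℓ)
    (hc : IsKTFirstFit (fun i => Icc (a i) (a i + 1)) ℓ c) (i : Fin n)
    (h2 : ℓ i = 2) : c i ≤ 2 := by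
  by_contra hgt
  push_neg at hgt
  obtain ⟨k1, hlt1, hll1, hn1, hc1⟩ := KT.ff_wit hc i (le_refl 1) (by omega)
  obtain ⟨k2, hlt2, hll2, hn2, hc2⟩ := KT.ff_wit hc i (by omega : (1:ℕ) ≤ 2) (by omega)
  have d12 : k1 ≠ k2 := fun h => by rw [h] at hc1; omega
  have hai : a i ∈ Icc (a i) (a i + 1) := Set.mem_Icc.mpr ⟨le_refl _, by linarith⟩
  have hai1 : a i + 1 ∈ Icc (a i) (a i + 1) := Set.mem_Icc.mpr ⟨by linarith, le_refl _⟩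
  have key : ∀ kL kR : Fin n, kL < i → kR < i → ℓ kL = ℓ i → ℓ kR = ℓ i →
      a i ∈ Icc (a kL) (a kL + 1) → a i + 1 ∈ Icc (a kR) (a kR + 1) → False := by
    intro kL kR hL hR hlL hlR heL heR
    obtain ⟨q, hq, hB⟩ := KT.guilty hℓ i (by omega)
    have hpos : 0 < Set.ncard
        { k : Fin n | k < i ∧ q ∈ Icc (a k) (a k + 1) ∧ ℓ k ≤ ℓ i - 1 } := by omega
    obtain ⟨K, hKlt, hKq, hKl⟩ := (Set.ncard_pos (Set.toFinite _)).mp hpos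
    rw [Set.mem_Icc] at hq hKq
    rcases le_total (a K) (a i) with hside | hside
    · -- K contains a i, as does kL : two earlier level-≤2 intervals at a i
      have hKai : a i ∈ Icc (a K) (a K + 1) := Set.mem_Icc.mpr ⟨hside, le_trans hq.1 hKq.2⟩
      have hKne : K ≠ kL := fun h => by rw [h] at hKl; omega
      have hsub : ({K, kL} : Set (Fin n)) ⊆
          { k : Fin n | k < i ∧ a i ∈ Icc (a k) (a k + 1) ∧ ℓ k ≤ ℓ i } := by
        rintro k (rfl | rfl)
        · exact ⟨hKlt, hKai, by omega⟩
        · exact ⟨hL, heL, by omega⟩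
      have hcard := Set.ncard_le_ncard hsub (Set.toFinite _)
      rw [Set.ncard_pair hKne] at hcard
      have := KT.level_prop hℓ i hai
      omega
    · -- K contains a i + 1, as does kR
      have hKai1 : a i + 1 ∈ Icc (a K) (a K + 1) :=
        Set.mem_Icc.mpr ⟨le_trans hKq.1 hq.2, by linarith⟩
      have hKne : K ≠ kR := fun h => by rw [h] at hKl; omega
      have hsub : ({K, kR} : Set (Fin n)) ⊆
          { k : Fin n | k < i ∧ a i + 1 ∈ Icc (a k) (a k + 1) ∧ ℓ k ≤ ℓ i } := by
        rintro k (rfl | rfl)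
        · exact ⟨hKlt, hKai1, by omega⟩
        · exact ⟨hR, heR, by omega⟩
      have hcard := Set.ncard_le_ncard hsub (Set.toFinite _)
      rw [Set.ncard_pair hKne] at hcard
      have := KT.level_prop hℓ i hai1
      omega
  rcases KT.nbr_pt hn1 with e1 | e1 <;> rcases KT.nbr_pt hn2 with e2 | e2
  · exact KT.pair_pt hℓ hlt1 hlt2 d12 hll1 hll2 e1 e2 hai
  · exact key k1 k2 hlt1 hlt2 hll1 hll2 e1 e2
  · exact key k2 k1 hlt2 hlt1 hll2 hll1 e2 e1
  · exact KT.pair_pt hℓ hlt1 hlt2 d12 hll1 hll2 e1 e2 hai1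

lemma KT.c_level_one (hℓ : IsKTLevel (fun i => Icc (a i) (a i + 1)) ℓ)
    (hc : IsKTFirstFit (fun i => Icc (a i) (a i + 1)) ℓ c) (i : Fin n)
    (h1 : ℓ i = 1) : c i = 1 := by
  have hle : c i ≤ 1 := by
    refine (hc i).2 ⟨le_refl 1, fun k hk hkl hkn => ?_⟩
    exfalso
    obtain ⟨t, htk, hti⟩ := hkn
    have hmem : k ∈ { k' : Fin n | k' < i ∧ t ∈ Icc (a k') (a k' + 1) ∧ ℓ k' ≤ ℓ i } :=
      ⟨hk, htk, hkl.le⟩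
    have hpos : 0 < Set.ncard { k' : Fin n | k' < i ∧ t ∈ Icc (a k') (a k' + 1) ∧ ℓ k' ≤ ℓ i } :=
      (Set.ncard_pos (Set.toFinite _)).mpr ⟨k, hmem⟩
    have := KT.level_prop hℓ i hti
    omega
  have := KT.c_pos hc i
  omega

lemma KT.level_le (hℓ : IsKTLevel (fun i => Icc (a i) (a i + 1)) ℓ)
    (hw : 1 ≤ cliqueNum (fun i : Fin n => Icc (a i) (a i + 1))) (i : Fin n) :
    ℓ i ≤ cliqueNum (fun i : Fin n => Icc (a i) (a i + 1)) := by
  set w := cliqueNum (fun i : Fin n => Icc (a i) (a i + 1)) with hwdef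
  have hbdd : BddAbove { m : ℕ | ∃ x : ℝ, m = Set.ncard { i : Fin n | x ∈ Icc (a i) (a i + 1) } } := by
    refine ⟨n, fun m hm => ?_⟩
    obtain ⟨x, rfl⟩ := hm
    have h1 := Set.ncard_le_ncard (Set.subset_univ { i : Fin n | x ∈ Icc (a i) (a i + 1) })
      (Set.toFinite _)
    simpa [Set.ncard_univ] using h1
  have hcov : ∀ x : ℝ, Set.ncard { k : Fin n | x ∈ Icc (a k) (a k + 1) } ≤ w :=
    fun x => le_csSup hbdd ⟨x, rfl⟩
  refine (hℓ i).2 ⟨hw, fun x hx => ?_⟩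
  show Set.ncard { k : Fin n | k < i ∧ x ∈ Icc (a k) (a k + 1) ∧ ℓ k ≤ w } ≤ w - 1
  have hnotmem : i ∉ { k : Fin n | k < i ∧ x ∈ Icc (a k) (a k + 1) ∧ ℓ k ≤ w } :=
    fun h => absurd h.1 (lt_irrefl i)
  have hsub : insert i { k : Fin n | k < i ∧ x ∈ Icc (a k) (a k + 1) ∧ ℓ k ≤ w } ⊆
      { k : Fin n | x ∈ Icc (a k) (a k + 1) } := by
    rintro k (rfl | hk)
    · exact hx
    · exact hk.2.1
  have h1 : Set.ncard { k : Fin n | k < i ∧ x ∈ Icc (a k) (a k + 1) ∧ ℓ k ≤ w } + 1 ≤ w := by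
    rw [← Set.ncard_insert_of_notMem hnotmem]
    exact le_trans (Set.ncard_le_ncard hsub (Set.toFinite _)) (hcov x)
  omega

end KTAux

/-- For any finite sequence of closed unit intervals presented online whose
clique number ω is at least 2, the Kierstead–Trotter algorithm uses at most
`3ω - 3` colors. -/
theorem kt_unit_upper_bound (n : ℕ) (a : Fin n → ℝ) (ℓ c : Fin n → ℕ)
    (hℓ : IsKTLevel (fun i => Icc (a i) (a i + 1)) ℓ)
    (hc : IsKTFirstFit (fun i => Icc (a i) (a i + 1)) ℓ c)
    (hω : 2 ≤ cliqueNum (fun i => Icc (a i) (a i + 1))) :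
    totalColors ℓ c ≤ 3 * cliqueNum (fun i => Icc (a i) (a i + 1)) - 3 := by
  set w := cliqueNum (fun i : Fin n => Icc (a i) (a i + 1)) with hwdef
  have hT : Finset.univ.image (fun i : Fin n => (ℓ i, c i)) ⊆
      (({1} ×ˢ {1} : Finset (ℕ × ℕ)) ∪ ({2} ×ˢ {1, 2})) ∪ ((Finset.Icc 3 w) ×ˢ {1, 2, 3}) := by
    intro p hp
    simp only [Finset.mem_image, Finset.mem_univ, true_and] at hp
    obtain ⟨i, rfl⟩ := hp
    have h1 := KT.level_pos hℓ i
    have h2 := KT.level_le hℓ (by omega) i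
    have h3 := KT.c_pos hc i
    have h4 := KT.c_le_three hℓ hc i
    simp only [Finset.mem_union, Finset.mem_product, Finset.mem_singleton, Finset.mem_insert,
      Finset.mem_Icc]
    by_cases e1 : ℓ i = 1
    · exact Or.inl (Or.inl ⟨e1, KT.c_level_one hℓ hc i e1⟩)
    by_cases e2 : ℓ i = 2
    · have := KT.c_level_two hℓ hc i e2
      exact Or.inl (Or.inr ⟨e2, by omega⟩)
    · exact Or.inr ⟨⟨by omega, h2⟩, by omega⟩
  have hcard : totalColors ℓ c ≤
      ((({1} ×ˢ {1} : Finset (ℕ × ℕ)) ∪ ({2} ×ˢ {1, 2})) ∪ ((Finset.Icc 3 w) ×ˢ {1, 2, 3})).card :=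
    Finset.card_le_card hT
  have hsum : ((({1} ×ˢ {1} : Finset (ℕ × ℕ)) ∪ ({2} ×ˢ {1, 2})) ∪
      ((Finset.Icc 3 w) ×ˢ {1, 2, 3})).card ≤ 3 * w - 3 := by
    have hc1 := Finset.card_union_le ((({1} ×ˢ {1} : Finset (ℕ × ℕ)) ∪ ({2} ×ˢ {1, 2})))
      ((Finset.Icc 3 w) ×ˢ ({1, 2, 3} : Finset ℕ))
    have hc2 := Finset.card_union_le ({1} ×ˢ {1} : Finset (ℕ × ℕ)) ({2} ×ˢ ({1, 2} : Finset ℕ))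
    have e1 : (({1} ×ˢ {1} : Finset (ℕ × ℕ))).card = 1 := by decide
    have e2 : (({2} ×ˢ ({1, 2} : Finset ℕ)) : Finset (ℕ × ℕ)).card = 2 := by decide
    have e3 : ((Finset.Icc 3 w) ×ˢ ({1, 2, 3} : Finset ℕ)).card = (w + 1 - 3) * 3 := by
      rw [Finset.card_product, Nat.card_Icc]
      norm_num
    omega
  exact le_trans hcard hsum
end

section
/- For any finite sequence of closed intervals presented online and any integer j ≥ 2, First-Fit uses at most three colors on the intervals that are assigned level j by the Kierstead–Trotter algorithm. -/
open Set

/-- For any finite sequence of closed intervals presented online and any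
integer `j ≥ 2`, First-Fit uses at most three colors on the intervals that
are assigned level `j` by the Kierstead–Trotter algorithm. -/
theorem kt_three_colors_per_level (n : ℕ) (lo hi : Fin n → ℝ)
    (hint : ∀ i, lo i ≤ hi i) (ℓ c : Fin n → ℕ)
    (hℓ : IsKTLevel (fun i => Icc (lo i) (hi i)) ℓ)
    (hc : IsKTFirstFit (fun i => Icc (lo i) (hi i)) ℓ c)
    (j : ℕ) (hj : 2 ≤ j) :
    colorsAtLevel ℓ c j ≤ 3 := by
  classical
  have hub : ∀ i : Fin n, ∀ x ∈ Icc (lo i) (hi i),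
      Set.ncard {k : Fin n | k < i ∧ x ∈ Icc (lo k) (hi k) ∧ ℓ k ≤ ℓ i} ≤ ℓ i - 1 :=
    fun i => (hℓ i).1.2
  -- witness points
  have hwit : ∀ i : Fin n, ℓ i = j → ∃ x, x ∈ Icc (lo i) (hi i) ∧
      j - 1 ≤ Set.ncard {k : Fin n | k < i ∧ x ∈ Icc (lo k) (hi k) ∧ ℓ k ≤ j - 1} := by
    intro i hi'
    have hnot : j - 1 ∉ {m : ℕ | 1 ≤ m ∧ ∀ x ∈ Icc (lo i) (hi i),
        Set.ncard {k : Fin n | k < i ∧ x ∈ Icc (lo k) (hi k) ∧ ℓ k ≤ m} ≤ m - 1} := by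
      intro hmem
      have := (hℓ i).2 hmem
      omega
    by_contra hcon
    push_neg at hcon
    apply hnot
    refine ⟨by omega, fun x hx => ?_⟩
    have := hcon x hx
    omega
  choose! w hw1 hw2 using hwit
  -- private point lemma
  have hpriv : ∀ i i' : Fin n, ℓ i = j → ℓ i' = j → i ≠ i' →
      w i ∉ Icc (lo i') (hi i') := by
    intro i i' hli hli' hne hmem
    rcases lt_or_gt_of_ne hne with hlt | hgt
    · -- i < i' : count earlier intervals at i' covering w i
      have hni : i ∉ {k : Fin n | k < i ∧ w i ∈ Icc (lo k) (hi k) ∧ ℓ k ≤ j - 1} := by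
        simp
      have hsub : insert i {k : Fin n | k < i ∧ w i ∈ Icc (lo k) (hi k) ∧ ℓ k ≤ j - 1}
          ⊆ {k : Fin n | k < i' ∧ w i ∈ Icc (lo k) (hi k) ∧ ℓ k ≤ ℓ i'} := by
        intro k hk
        simp only [Set.mem_insert_iff, Set.mem_setOf_eq] at hk ⊢
        rcases hk with rfl | ⟨hk1, hk2, hk3⟩
        · exact ⟨hlt, hw1 k hli, by omega⟩
        · exact ⟨hk1.trans hlt, hk2, by omega⟩
      have h1 := Set.ncard_insert_of_notMem hni (Set.toFinite _)
      have h2 := Set.ncard_le_ncard hsub (Set.toFinite _)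
      have h3 := hub i' (w i) hmem
      have h4 := hw2 i hli
      omega
    · -- i' < i : count earlier intervals at i covering w i
      have hni : i' ∉ {k : Fin n | k < i ∧ w i ∈ Icc (lo k) (hi k) ∧ ℓ k ≤ j - 1} := by
        simp only [Set.mem_setOf_eq, not_and]
        intro _ _
        omega
      have hsub : insert i' {k : Fin n | k < i ∧ w i ∈ Icc (lo k) (hi k) ∧ ℓ k ≤ j - 1}
          ⊆ {k : Fin n | k < i ∧ w i ∈ Icc (lo k) (hi k) ∧ ℓ k ≤ ℓ i} := by
        intro k hk
        simp only [Set.mem_insert_iff, Set.mem_setOf_eq] at hk ⊢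
        rcases hk with rfl | ⟨hk1, hk2, hk3⟩
        · exact ⟨hgt, hmem, by omega⟩
        · exact ⟨hk1, hk2, by omega⟩
      have h1 := Set.ncard_insert_of_notMem hni (Set.toFinite _)
      have h2 := Set.ncard_le_ncard hsub (Set.toFinite _)
      have h3 := hub i (w i) (hw1 i hli)
      have h4 := hw2 i hli
      omega
  -- at most two same-level neighbours
  have hnb : ∀ v : Fin n, ℓ v = j →
      (Finset.univ.filter fun k : Fin n => k < v ∧ ℓ k = ℓ v ∧
        (Icc (lo k) (hi k) ∩ Icc (lo v) (hi v)).Nonempty).card ≤ 2 := by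
    intro v hv
    have hcard : (Finset.univ : Finset Bool).card = 2 := by simp
    rw [← hcard]
    apply Finset.card_le_card_of_injOn (fun k => decide (w v < lo k))
      (fun _ _ => Finset.mem_univ _)
    intro k1 hk1 k2 hk2 heq
    simp only [Finset.coe_filter, Finset.mem_univ, true_and, Set.mem_setOf_eq] at hk1 hk2
    obtain ⟨hk1v, hk1l, p1, hp1a, hp1b⟩ := hk1
    obtain ⟨hk2v, hk2l, p2, hp2a, hp2b⟩ := hk2
    by_contra hne
    have hk1j : ℓ k1 = j := hk1l.trans hv
    have hk2j : ℓ k2 = j := hk2l.trans hv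
    have hk1nv : k1 ≠ v := ne_of_lt hk1v
    have hk2nv : k2 ≠ v := ne_of_lt hk2v
    have hwv : w v ∈ Icc (lo v) (hi v) := hw1 v hv
    have hwvk1 : w v ∉ Icc (lo k1) (hi k1) := by
      intro h; exact hpriv v k1 hv hk1j (Ne.symm hk1nv) h
    have hwvk2 : w v ∉ Icc (lo k2) (hi k2) := by
      intro h; exact hpriv v k2 hv hk2j (Ne.symm hk2nv) h
    have hwk1 : w k1 ∈ Icc (lo k1) (hi k1) := hw1 k1 hk1j
    have hwk2 : w k2 ∈ Icc (lo k2) (hi k2) := hw1 k2 hk2j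
    have hwk1v : w k1 ∉ Icc (lo v) (hi v) := hpriv k1 v hk1j hv hk1nv
    have hwk2v : w k2 ∉ Icc (lo v) (hi v) := hpriv k2 v hk2j hv hk2nv
    have hwk12 : w k1 ∉ Icc (lo k2) (hi k2) := hpriv k1 k2 hk1j hk2j hne
    have hwk21 : w k2 ∉ Icc (lo k1) (hi k1) := hpriv k2 k1 hk2j hk1j (Ne.symm hne)
    simp only [Set.mem_Icc, not_and, not_le] at hwvk1 hwvk2 hwk1v hwk2v hwk12 hwk21
    obtain ⟨hwva, hwvb⟩ := hwv
    obtain ⟨hp1l, hp1r⟩ := hp1a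
    obtain ⟨hp1vl, hp1vr⟩ := hp1b
    obtain ⟨hp2l, hp2r⟩ := hp2a
    obtain ⟨hp2vl, hp2vr⟩ := hp2b
    obtain ⟨hx1l, hx1r⟩ := hwk1
    obtain ⟨hx2l, hx2r⟩ := hwk2
    by_cases hs1 : w v < lo k1
    · -- both on the right of w v
      have hs2 : w v < lo k2 := by
        by_contra hs2
        simp [hs1, hs2] at heq
      -- witnesses of k1, k2 are > hi v
      have hx1 : hi v < w k1 := by
        rcases lt_or_ge (w k1) (lo v) with h | h
        · linarith
        · rcases lt_or_ge (hi v) (w k1) with h' | h'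
          · exact h'
          · exact absurd (hwk1v h) (by linarith)
      have hx2 : hi v < w k2 := by
        rcases lt_or_ge (w k2) (lo v) with h | h
        · linarith
        · rcases lt_or_ge (hi v) (w k2) with h' | h'
          · exact h'
          · exact absurd (hwk2v h) (by linarith)
      rcases le_total (w k1) (w k2) with hle | hle
      · -- w k1 ∈ Icc (lo k2) (hi k2)
        have h1 : lo k2 ≤ w k1 := by linarith
        have := hwk12 h1
        linarith
      · have h1 : lo k1 ≤ w k2 := by linarith
        have := hwk21 h1
        linarith
    · -- both on the left of w v
      have hs2 : ¬ (w v < lo k2) := by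
        by_contra hs2
        simp [hs1, hs2] at heq
      push_neg at hs1 hs2
      have hb1 : hi k1 < w v := by
        rcases lt_or_ge (hi k1) (w v) with h | h
        · exact h
        · exact absurd (hwvk1 hs1) (by linarith)
      have hb2 : hi k2 < w v := by
        rcases lt_or_ge (hi k2) (w v) with h | h
        · exact h
        · exact absurd (hwvk2 hs2) (by linarith)
      have hx1 : w k1 < lo v := by
        rcases lt_or_ge (w k1) (lo v) with h | h
        · exact h
        · exact absurd (hwk1v h) (by linarith)
      have hx2 : w k2 < lo v := by
        rcases lt_or_ge (w k2) (lo v) with h | h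
        · exact h
        · exact absurd (hwk2v h) (by linarith)
      rcases le_total (w k1) (w k2) with hle | hle
      · -- w k2 ∈ Icc (lo k1) (hi k1)
        have h1 : lo k1 ≤ w k2 := by linarith
        have := hwk21 h1
        linarith
      · have h1 : lo k2 ≤ w k1 := by linarith
        have := hwk12 h1
        linarith
  -- bound on colors
  have hcol : ∀ i : Fin n, ℓ i = j → 1 ≤ c i ∧ c i ≤ 3 := by
    intro i hli
    refine ⟨(hc i).1.1, ?_⟩
    set S := Finset.univ.filter (fun k : Fin n => k < i ∧ ℓ k = ℓ i ∧
      (Icc (lo k) (hi k) ∩ Icc (lo i) (hi i)).Nonempty) with hS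
    have hScard : S.card ≤ 2 := hnb i hli
    have himg : (S.image c).card ≤ 2 := le_trans Finset.card_image_le hScard
    have hex : ∃ m : ℕ, 1 ≤ m ∧ m ≤ 3 ∧ m ∉ S.image c := by
      by_contra h
      push_neg at h
      have hsub : ({1, 2, 3} : Finset ℕ) ⊆ S.image c := by
        intro m hm
        simp only [Finset.mem_insert, Finset.mem_singleton] at hm
        rcases hm with rfl | rfl | rfl
        · exact h 1 le_rfl (by norm_num)
        · exact h 2 (by norm_num) (by norm_num)
        · exact h 3 (by norm_num) le_rfl
      have h3 := Finset.card_le_card hsub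
      norm_num at h3
      omega
    obtain ⟨m, hm1, hm3, hmnot⟩ := hex
    have hle : c i ≤ m := by
      apply (hc i).2
      refine ⟨hm1, fun k hki hkl hinter hck => ?_⟩
      exact hmnot (Finset.mem_image.mpr ⟨k, by
        simp only [hS, Finset.mem_filter, Finset.mem_univ, true_and]
        exact ⟨hki, hkl, hinter⟩, hck⟩)
    omega
  -- conclude
  unfold colorsAtLevel
  have hsub : ((Finset.univ.filter (fun i : Fin n => ℓ i = j)).image c)
      ⊆ ({1, 2, 3} : Finset ℕ) := by
    intro m hm
    obtain ⟨i, hfi, rfl⟩ := Finset.mem_image.mp hm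
    simp only [Finset.mem_filter, Finset.mem_univ, true_and] at hfi
    obtain ⟨h1, h2⟩ := hcol i hfi
    simp only [Finset.mem_insert, Finset.mem_singleton]
    omega
  calc _ ≤ ({1,2,3} : Finset ℕ).card := Finset.card_le_card hsub
    _ = 3 := by norm_num
end

section
/- For any finite sequence of closed unit intervals presented online, First-Fit uses at most two colors on the intervals that are assigned level 2 by the Kierstead–Trotter algorithm. -/
open Set

lemma unit_endpoint_mem {a b : ℝ} (h : (Icc b (b + 1) ∩ Icc a (a + 1)).Nonempty) :
    a ∈ Icc b (b + 1) ∨ a + 1 ∈ Icc b (b + 1) := by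
  obtain ⟨x, ⟨hb1, hb2⟩, ha1, ha2⟩ := h
  rcases le_total b a with h' | h'
  · exact Or.inl ⟨h', by linarith⟩
  · exact Or.inr ⟨by linarith, by linarith⟩

/-- For any finite sequence of closed unit intervals presented online,
First-Fit uses at most two colors on the intervals assigned level 2 by the
Kierstead–Trotter algorithm. -/
theorem kt_unit_two_colors_level_two (n : ℕ) (a : Fin n → ℝ) (ℓ c : Fin n → ℕ)
    (hℓ : IsKTLevel (fun i => Icc (a i) (a i + 1)) ℓ)
    (hc : IsKTFirstFit (fun i => Icc (a i) (a i + 1)) ℓ c) :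
    colorsAtLevel ℓ c 2 ≤ 2 := by
  have key : ∀ i : Fin n, ℓ i = 2 → c i ≤ 2 := by
    intro i h2
    by_contra hgt
    push_neg at hgt
    obtain ⟨⟨-, hmem⟩, hlb⟩ := hℓ i
    simp only [h2] at hmem
    -- hmem : ∀ x ∈ Icc (a i) (a i + 1), ncard {k | k < i ∧ x ∈ Icc (a k) (a k+1) ∧ ℓ k ≤ 2} ≤ 1
    -- level 1 fails for i : there is an earlier level-1 interval meeting I i
    have h1not : ¬ ∀ x ∈ Icc (a i) (a i + 1),
        Set.ncard { k : Fin n | k < i ∧ x ∈ Icc (a k) (a k + 1) ∧ ℓ k ≤ 1 } ≤ 0 := by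
      intro hall
      have : ℓ i ≤ 1 := hlb ⟨le_refl 1, by simpa using hall⟩
      omega
    push_neg at h1not
    obtain ⟨x0, hx0, hnc⟩ := h1not
    obtain ⟨k0, hk0lt, hk0x, hk0le⟩ :=
      Set.nonempty_of_ncard_ne_zero (by omega : Set.ncard
        { k : Fin n | k < i ∧ x0 ∈ Icc (a k) (a k + 1) ∧ ℓ k ≤ 1 } ≠ 0)
    -- First-Fit : colors 1 and 2 are blocked
    obtain ⟨⟨-, -⟩, hclb⟩ := hc i
    have hblock : ∀ m : ℕ, 1 ≤ m → m ≤ 2 → ∃ k : Fin n, k < i ∧ ℓ k = ℓ i ∧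
        (Icc (a k) (a k + 1) ∩ Icc (a i) (a i + 1)).Nonempty ∧ c k = m := by
      intro m hm1 hm2
      by_contra hno
      push_neg at hno
      have : c i ≤ m := hclb ⟨hm1, fun k hk hlk hint hck => by
        exact absurd hck.symm (fun h => (hno k hk hlk hint h.symm))⟩
      omega
    obtain ⟨k1, hk1lt, hk1lv, hk1int, hk1c⟩ := hblock 1 le_rfl (by norm_num)
    obtain ⟨k2, hk2lt, hk2lv, hk2int, hk2c⟩ := hblock 2 (by norm_num) le_rfl
    -- at each endpoint of I i, at most one earlier interval of level ≤ 2
    have two : ∀ x ∈ Icc (a i) (a i + 1), ∀ p q : Fin n,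
        p < i → q < i → x ∈ Icc (a p) (a p + 1) → x ∈ Icc (a q) (a q + 1) →
        ℓ p ≤ 2 → ℓ q ≤ 2 → p = q := by
      intro x hx p q hp hq hxp hxq hlp hlq
      by_contra hne
      have h1 : 1 < Set.ncard { k : Fin n | k < i ∧ x ∈ Icc (a k) (a k + 1) ∧ ℓ k ≤ 2 } :=
        (Set.one_lt_ncard_iff (Set.toFinite _)).2 ⟨p, q, ⟨hp, hxp, hlp⟩, ⟨hq, hxq, hlq⟩, hne⟩
      have h2 := hmem x hx
      omega
    have hL : a i ∈ Icc (a i) (a i + 1) := ⟨le_refl _, by linarith⟩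
    have hR : a i + 1 ∈ Icc (a i) (a i + 1) := ⟨by linarith, le_refl _⟩
    -- endpoint memberships
    have e0 : a i ∈ Icc (a k0) (a k0 + 1) ∨ a i + 1 ∈ Icc (a k0) (a k0 + 1) :=
      unit_endpoint_mem ⟨x0, hk0x, hx0⟩
    have e1 := unit_endpoint_mem hk1int
    have e2 := unit_endpoint_mem hk2int
    -- distinctness
    have hl0 : ℓ k0 = 1 := le_antisymm hk0le (hℓ k0).1.1
    have d01 : k0 ≠ k1 := fun h => by rw [h, hk1lv, h2] at hl0; omega
    have d02 : k0 ≠ k2 := fun h => by rw [h, hk2lv, h2] at hl0; omega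
    have d12 : k1 ≠ k2 := fun h => by rw [h, hk2c] at hk1c; omega
    have l0 : ℓ k0 ≤ 2 := by omega
    have l1 : ℓ k1 ≤ 2 := by rw [hk1lv, h2]
    have l2 : ℓ k2 ≤ 2 := by rw [hk2lv, h2]
    rcases e0 with e0 | e0 <;> rcases e1 with e1 | e1 <;> rcases e2 with e2 | e2
    · exact d01 (two _ hL k0 k1 hk0lt hk1lt e0 e1 l0 l1)
    · exact d01 (two _ hL k0 k1 hk0lt hk1lt e0 e1 l0 l1)
    · exact d02 (two _ hL k0 k2 hk0lt hk2lt e0 e2 l0 l2)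
    · exact d12 (two _ hR k1 k2 hk1lt hk2lt e1 e2 l1 l2)
    · exact d12 (two _ hL k1 k2 hk1lt hk2lt e1 e2 l1 l2)
    · exact d02 (two _ hR k0 k2 hk0lt hk2lt e0 e2 l0 l2)
    · exact d01 (two _ hR k0 k1 hk0lt hk1lt e0 e1 l0 l1)
    · exact d01 (two _ hR k0 k1 hk0lt hk1lt e0 e1 l0 l1)
  have hsub : ((Finset.univ.filter (fun i : Fin n => ℓ i = 2)).image c) ⊆ ({1, 2} : Finset ℕ) := by
    intro m hm
    simp only [Finset.mem_image, Finset.mem_filter] at hm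
    obtain ⟨i, ⟨-, hi2⟩, rfl⟩ := hm
    have h1 : 1 ≤ c i := (hc i).1.1
    have h2 : c i ≤ 2 := key i hi2
    simp only [Finset.mem_insert, Finset.mem_singleton]
    omega
  calc colorsAtLevel ℓ c 2 ≤ ({1, 2} : Finset ℕ).card := Finset.card_le_card hsub
    _ ≤ 2 := by simp
end

section
/- For any finite sequence of closed unit intervals presented online, every interval assigned level 2 by the Kierstead–Trotter algorithm intersects at most one other interval of level 2; that is, the intersection graph of the level-2 intervals has maximum degree at most 1. -/
open Set

lemma kt_two_earlier {n : ℕ} {a : Fin n → ℝ} {ℓ : Fin n → ℕ}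
    (hℓ : IsKTLevel (fun i => Icc (a i) (a i + 1)) ℓ)
    {p q r : Fin n} (hp : ℓ p = 2) (hq : q < p) (hr : r < p) (hqr : q ≠ r)
    (hlq : ℓ q ≤ 2) (hlr : ℓ r ≤ 2) {x : ℝ}
    (hxp : x ∈ Icc (a p) (a p + 1)) (hxq : x ∈ Icc (a q) (a q + 1))
    (hxr : x ∈ Icc (a r) (a r + 1)) : False := by
  have h := (hℓ p).1.2 x hxp
  rw [hp] at h
  have h2 : 1 < Set.ncard {k : Fin n | k < p ∧
      x ∈ Icc (a k) (a k + 1) ∧ ℓ k ≤ 2} := by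
    rw [Set.one_lt_ncard_iff (Set.toFinite _)]
    exact ⟨q, r, ⟨hq, hxq, hlq⟩, ⟨hr, hxr, hlr⟩, hqr⟩
  have h' : Set.ncard {k : Fin n | k < p ∧
      x ∈ Icc (a k) (a k + 1) ∧ ℓ k ≤ 2} ≤ 2 - 1 := h
  omega

lemma kt_witness {n : ℕ} {a : Fin n → ℝ} {ℓ : Fin n → ℕ}
    (hℓ : IsKTLevel (fun i => Icc (a i) (a i + 1)) ℓ) {i : Fin n} (hi : ℓ i = 2) :
    ∃ x ∈ Icc (a i) (a i + 1), ∃ j : Fin n, j < i ∧ ℓ j = 1 ∧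
      x ∈ Icc (a j) (a j + 1) := by
  by_contra hcon
  push_neg at hcon
  have h1 : ℓ i ≤ 1 := by
    apply (hℓ i).2
    refine ⟨le_rfl, fun x hx => ?_⟩
    show Set.ncard {k : Fin n | k < i ∧ x ∈ Icc (a k) (a k + 1) ∧ ℓ k ≤ 1} ≤ 1 - 1
    have hempty : {k : Fin n | k < i ∧ x ∈ Icc (a k) (a k + 1) ∧ ℓ k ≤ 1} = ∅ := by
      ext m
      simp only [Set.mem_setOf_eq, Set.mem_empty_iff_false, iff_false, not_and]
      intro hmi hxm hm1
      have hm : ℓ m = 1 := le_antisymm hm1 (hℓ m).1.1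
      exact hcon x hx m hmi hm hxm
    rw [hempty, Set.ncard_empty]
  omega

lemma kt_caseB {n : ℕ} {a : Fin n → ℝ} {ℓ : Fin n → ℕ}
    (hℓ : IsKTLevel (fun i => Icc (a i) (a i + 1)) ℓ)
    {i k k' : Fin n} (hi : ℓ i = 2) (hk2 : ℓ k = 2) (hk'2 : ℓ k' = 2)
    (hki : k ≠ i) (hk'i : k' ≠ i)
    (h1 : a i ≤ a k + 1) (h4 : a k' ≤ a i + 1) (h5 : a k + 1 < a k') : False := by
  obtain ⟨w, ⟨hwa, hwb⟩, j, hji, hj1, hwja, hwjb⟩ := kt_witness hℓ hi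
  have hj2 : ℓ j ≤ 2 := by omega
  have hjk : j ≠ k := fun h => by rw [h, hk2] at hj1; omega
  have hjk' : j ≠ k' := fun h => by rw [h, hk'2] at hj1; omega
  have hjine : j ≠ i := fun h => by rw [h, hi] at hj1; omega
  have haki : a k < a i := by linarith
  have haik' : a i < a k' := by linarith
  by_cases hw : w ≤ a k + 1
  · -- w ∈ I k
    have hwk : w ∈ Icc (a k) (a k + 1) := ⟨by linarith, hw⟩
    rcases hki.lt_or_gt with hlt | hlt
    · exact kt_two_earlier hℓ hi hji hlt hjk hj2 (le_of_eq hk2)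
        ⟨hwa, hwb⟩ ⟨hwja, hwjb⟩ hwk
    · exact kt_two_earlier hℓ hk2 (hji.trans hlt) hlt hjine hj2 (le_of_eq hi)
        hwk ⟨hwja, hwjb⟩ ⟨hwa, hwb⟩
  · by_cases hw' : a k' ≤ w
    · have hwk' : w ∈ Icc (a k') (a k' + 1) := ⟨hw', by linarith⟩
      rcases hk'i.lt_or_gt with hlt | hlt
      · exact kt_two_earlier hℓ hi hji hlt hjk' hj2 (le_of_eq hk'2)
          ⟨hwa, hwb⟩ ⟨hwja, hwjb⟩ hwk'
      · exact kt_two_earlier hℓ hk'2 (hji.trans hlt) hlt hjine hj2 (le_of_eq hi)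
          hwk' ⟨hwja, hwjb⟩ ⟨hwa, hwb⟩
    · push_neg at hw hw'
      by_cases hb : a j ≤ a k + 1
      · -- x = a k + 1 in I j, I i, I k
        have hxj : a k + 1 ∈ Icc (a j) (a j + 1) := ⟨hb, by linarith⟩
        have hxi : (a k : ℝ) + 1 ∈ Icc (a i) (a i + 1) := ⟨h1, by linarith⟩
        have hxk : (a k : ℝ) + 1 ∈ Icc (a k) (a k + 1) := ⟨by linarith, le_rfl⟩
        rcases hki.lt_or_gt with hlt | hlt
        · exact kt_two_earlier hℓ hi hji hlt hjk hj2 (le_of_eq hk2) hxi hxj hxk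
        · exact kt_two_earlier hℓ hk2 (hji.trans hlt) hlt hjine hj2 (le_of_eq hi)
            hxk hxj hxi
      · push_neg at hb
        have hxj : a k' ∈ Icc (a j) (a j + 1) := ⟨by linarith, by linarith⟩
        have hxi : a k' ∈ Icc (a i) (a i + 1) := ⟨by linarith, h4⟩
        have hxk' : a k' ∈ Icc (a k') (a k' + 1) := ⟨le_rfl, by linarith⟩
        rcases hk'i.lt_or_gt with hlt | hlt
        · exact kt_two_earlier hℓ hi hji hlt hjk' hj2 (le_of_eq hk'2) hxi hxj hxk'
        · exact kt_two_earlier hℓ hk'2 (hji.trans hlt) hlt hjine hj2 (le_of_eq hi)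
            hxk' hxj hxi

lemma kt_caseA {n : ℕ} {a : Fin n → ℝ} {ℓ : Fin n → ℕ}
    (hℓ : IsKTLevel (fun i => Icc (a i) (a i + 1)) ℓ)
    {i k k' : Fin n} (hi : ℓ i = 2) (hk2 : ℓ k = 2) (hk'2 : ℓ k' = 2)
    (hki : k ≠ i) (hk'i : k' ≠ i) (hkk' : k ≠ k')
    (h1 : a i ≤ a k + 1) (h2 : a k ≤ a i + 1)
    (h3 : a i ≤ a k' + 1) (h4 : a k' ≤ a i + 1)
    (h5 : a k ≤ a k' + 1) (h6 : a k' ≤ a k + 1) : False := by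
  set t := max (max (a i) (a k)) (a k') with ht
  have hti : t ∈ Icc (a i) (a i + 1) :=
    ⟨le_trans (le_max_left _ _) (le_max_left _ _),
      max_le (max_le (by linarith) h2) h4⟩
  have htk : t ∈ Icc (a k) (a k + 1) :=
    ⟨le_trans (le_max_right _ _) (le_max_left _ _),
      max_le (max_le h1 (by linarith)) h6⟩
  have htk' : t ∈ Icc (a k') (a k' + 1) :=
    ⟨le_max_right _ _, max_le (max_le h3 h5) (by linarith)⟩
  rcases hki.lt_or_gt with hik1 | hik1
  · rcases hk'i.lt_or_gt with hik2 | hik2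
    · exact kt_two_earlier hℓ hi hik1 hik2 hkk' (le_of_eq hk2) (le_of_eq hk'2)
        hti htk htk'
    · exact kt_two_earlier hℓ hk'2 (hik1.trans hik2) hik2 hki (le_of_eq hk2)
        (le_of_eq hi) htk' htk hti
  · rcases hk'i.lt_or_gt with hik2 | hik2
    · exact kt_two_earlier hℓ hk2 hik1 (hik2.trans hik1) (Ne.symm hk'i)
        (le_of_eq hi) (le_of_eq hk'2) htk hti htk'
    · rcases hkk'.lt_or_gt with hlt | hlt
      · exact kt_two_earlier hℓ hk'2 hik2 hlt (Ne.symm hki) (le_of_eq hi)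
          (le_of_eq hk2) htk' hti htk
      · exact kt_two_earlier hℓ hk2 hik1 hlt (Ne.symm hk'i) (le_of_eq hi)
          (le_of_eq hk'2) htk hti htk'

/-- Every unit interval assigned level 2 by the Kierstead–Trotter algorithm
intersects at most one other interval of level 2: the intersection graph of
the level-2 intervals has maximum degree at most 1. -/
theorem kt_unit_level_two_degree (n : ℕ) (a : Fin n → ℝ) (ℓ : Fin n → ℕ)
    (hℓ : IsKTLevel (fun i => Icc (a i) (a i + 1)) ℓ) :
    ∀ i : Fin n, ℓ i = 2 →
      Set.ncard { k : Fin n | k ≠ i ∧ ℓ k = 2 ∧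
        (Icc (a k) (a k + 1) ∩ Icc (a i) (a i + 1)).Nonempty } ≤ 1 := by
  intro i hi
  by_contra hcard
  push_neg at hcard
  rw [Set.one_lt_ncard_iff (Set.toFinite _)] at hcard
  obtain ⟨k, k', ⟨hki, hk2, hint⟩, ⟨hk'i, hk'2, hint'⟩, hkk'⟩ := hcard
  obtain ⟨x1, ⟨hx1a, hx1b⟩, hx1c, hx1d⟩ := hint
  obtain ⟨x2, ⟨hx2a, hx2b⟩, hx2c, hx2d⟩ := hint'
  have h1 : a i ≤ a k + 1 := hx1c.trans hx1b
  have h2 : a k ≤ a i + 1 := hx1a.trans hx1d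
  have h3 : a i ≤ a k' + 1 := hx2c.trans hx2b
  have h4 : a k' ≤ a i + 1 := hx2a.trans hx2d
  by_cases hB : a k + 1 < a k'
  · exact kt_caseB hℓ hi hk2 hk'2 hki hk'i h1 h4 hB
  · by_cases hB' : a k' + 1 < a k
    · exact kt_caseB hℓ hi hk'2 hk2 hk'i hki h3 h2 hB'
    · exact kt_caseA hℓ hi hk2 hk'2 hki hk'i hkk' h1 h2 h3 h4
        (not_lt.1 hB') (not_lt.1 hB)
end

section
/- For any finite sequence of closed intervals presented online with clique number ω, the Kierstead–Trotter level of every interval satisfies ℓ(v_i) ≤ ω. -/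
open Set

/-- The Kierstead–Trotter level of every interval is at most the clique
number of the sequence. -/
theorem kt_level_le_cliqueNum (n : ℕ) (lo hi : Fin n → ℝ)
    (hint : ∀ i, lo i ≤ hi i) (ℓ : Fin n → ℕ)
    (hℓ : IsKTLevel (fun i => Icc (lo i) (hi i)) ℓ) :
    ∀ i : Fin n, ℓ i ≤ cliqueNum (fun i => Icc (lo i) (hi i)) := by
  intro i
  set I : Fin n → Set ℝ := fun i => Icc (lo i) (hi i) with hI
  have hbdd : BddAbove { m : ℕ | ∃ x : ℝ, m = Set.ncard { k : Fin n | x ∈ I k } } := by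
    refine ⟨n, ?_⟩
    rintro m ⟨x, rfl⟩
    calc Set.ncard {k : Fin n | x ∈ I k}
        ≤ Set.ncard (Set.univ : Set (Fin n)) :=
          Set.ncard_le_ncard (Set.subset_univ _) Set.finite_univ
      _ = n := by simp [Set.ncard_univ]
  have hcnum : ∀ x : ℝ, Set.ncard {k : Fin n | x ∈ I k} ≤
      cliqueNum I := fun x => le_csSup hbdd ⟨x, rfl⟩
  obtain ⟨⟨h1, hprop⟩, hleast⟩ := hℓ i
  rcases Nat.lt_or_ge (ℓ i) 2 with h2 | h2
  · have hmem : i ∈ {k : Fin n | lo i ∈ I k} := by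
      simp [hI, Set.mem_Icc, le_refl, hint i]
    have h1' : 1 ≤ Set.ncard {k : Fin n | lo i ∈ I k} := by
      rw [Nat.one_le_iff_ne_zero]
      intro h
      have := (Set.ncard_eq_zero (Set.toFinite _)).mp h
      rw [this] at hmem
      exact hmem
    have := hcnum (lo i)
    omega
  · have hnot : ℓ i - 1 ∉ { j : ℕ | 1 ≤ j ∧ ∀ x ∈ I i,
        Set.ncard { k : Fin n | k < i ∧ x ∈ I k ∧ ℓ k ≤ j } ≤ j - 1 } := by
      intro hmem
      have := hleast hmem
      omega
    have hnot' : ¬ ∀ x ∈ I i,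
        Set.ncard { k : Fin n | k < i ∧ x ∈ I k ∧ ℓ k ≤ ℓ i - 1 } ≤ ℓ i - 1 - 1 := by
      intro h
      exact hnot ⟨by omega, h⟩
    push_neg at hnot'
    obtain ⟨x, hx, hcard⟩ := hnot'
    set S := { k : Fin n | k < i ∧ x ∈ I k ∧ ℓ k ≤ ℓ i - 1 } with hS
    have hSi : i ∉ S := by simp [hS]
    have hsub : insert i S ⊆ {k : Fin n | x ∈ I k} := by
      intro k hk
      rcases Set.mem_insert_iff.mp hk with rfl | hk
      · exact hx
      · exact hk.2.1
    have hins := Set.ncard_insert_of_notMem hSi (Set.toFinite S)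
    have hmono := Set.ncard_le_ncard hsub (Set.toFinite _)
    have := hcnum x
    omega
end

section
/- For any finite sequence of closed unit intervals presented online, if an interval v_i is assigned level 2 by the Kierstead–Trotter algorithm, then at least one of the two endpoints of v_i is contained in some earlier interval v_k (k < i) of level 1. -/
open Set

/-- If a unit interval is assigned level 2 by the Kierstead–Trotter
algorithm, then at least one of its endpoints is contained in an earlier
interval of level 1. -/
theorem kt_unit_level_two_endpoint (n : ℕ) (a : Fin n → ℝ) (ℓ : Fin n → ℕ)
    (hℓ : IsKTLevel (fun i => Icc (a i) (a i + 1)) ℓ)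
    (i : Fin n) (hi : ℓ i = 2) :
    ∃ k : Fin n, k < i ∧ ℓ k = 1 ∧
      (a i ∈ Icc (a k) (a k + 1) ∨ a i + 1 ∈ Icc (a k) (a k + 1)) := by
  obtain ⟨hmem, hlb⟩ := hℓ i
  -- 1 is not in the set, since ℓ i = 2
  have h1 : ¬ (1 ≤ 1 ∧ ∀ x ∈ Icc (a i) (a i + 1),
      Set.ncard { k : Fin n | k < i ∧ x ∈ Icc (a k) (a k + 1) ∧ ℓ k ≤ 1 } ≤ 1 - 1) := by
    intro h
    have := hlb h
    omega
  push_neg at h1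
  obtain ⟨x, hx, hcard⟩ := h1 le_rfl
  have hne : { k : Fin n | k < i ∧ x ∈ Icc (a k) (a k + 1) ∧ ℓ k ≤ 1 }.Nonempty := by
    by_contra h
    rw [Set.not_nonempty_iff_eq_empty] at h
    rw [h] at hcard
    simp at hcard
  obtain ⟨k, hki, hxk, hℓk⟩ := hne
  have hk1 : ℓ k = 1 := le_antisymm hℓk (hℓ k).1.1
  refine ⟨k, hki, hk1, ?_⟩
  obtain ⟨hxi1, hxi2⟩ := hx
  obtain ⟨hxk1, hxk2⟩ := hxk
  rcases le_or_gt (a k) (a i) with h | h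
  · exact Or.inl ⟨h, le_trans hxi1 hxk2⟩
  · exact Or.inr ⟨le_trans hxk1 hxi2, by linarith⟩
end

section
/- For any finite sequence of closed intervals presented online with clique number ω ≥ 1, the total number of colors used by the Kierstead–Trotter algorithm is at most 3ω − 2. -/
open Set

section Aux

variable {n : ℕ} {lo hi : Fin n → ℝ} {ℓ c : Fin n → ℕ}

lemma kt_witness_s12 (hℓ : IsKTLevel (fun i => Icc (lo i) (hi i)) ℓ) (i : Fin n)
    (h2 : 2 ≤ ℓ i) :
    ∃ y ∈ Icc (lo i) (hi i),
      ℓ i - 1 ≤ Set.ncard { k : Fin n | k < i ∧ y ∈ Icc (lo k) (hi k) ∧ ℓ k ≤ ℓ i - 1 } := by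
  by_contra h
  push_neg at h
  have hmem : (ℓ i - 1) ∈ { j : ℕ | 1 ≤ j ∧ ∀ x ∈ Icc (lo i) (hi i),
      Set.ncard { k : Fin n | k < i ∧ x ∈ Icc (lo k) (hi k) ∧ ℓ k ≤ j } ≤ j - 1 } := by
    refine ⟨by omega, fun x hx => ?_⟩
    have := h x hx
    omega
  have := (hℓ i).2 hmem
  omega

lemma kt_private (hℓ : IsKTLevel (fun i => Icc (lo i) (hi i)) ℓ) {i i' : Fin n}
    (hne : i ≠ i') (hlev : ℓ i' = ℓ i) (h2 : 2 ≤ ℓ i) {y : ℝ}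
    (hy : y ∈ Icc (lo i) (hi i))
    (hw : ℓ i - 1 ≤ Set.ncard { k : Fin n | k < i ∧ y ∈ Icc (lo k) (hi k) ∧ ℓ k ≤ ℓ i - 1 }) :
    y ∉ Icc (lo i') (hi i') := by
  intro hy'
  set W := { k : Fin n | k < i ∧ y ∈ Icc (lo k) (hi k) ∧ ℓ k ≤ ℓ i - 1 } with hW
  rcases lt_or_gt_of_ne hne with h | h
  · -- i < i' : use constraint of i' at y
    have hcon : Set.ncard { k : Fin n | k < i' ∧ y ∈ Icc (lo k) (hi k) ∧ ℓ k ≤ ℓ i' } ≤ ℓ i' - 1 :=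
      (hℓ i').1.2 y hy'
    have hni : i ∉ W := fun hw' => lt_irrefl i hw'.1
    have hsub : insert i W ⊆ { k : Fin n | k < i' ∧ y ∈ Icc (lo k) (hi k) ∧ ℓ k ≤ ℓ i' } := by
      rintro k (rfl | ⟨hk, hyk, hlk⟩)
      · exact ⟨h, hy, by omega⟩
      · exact ⟨lt_trans hk h, hyk, by omega⟩
    have hcard : W.ncard + 1 = (insert i W).ncard :=
      (Set.ncard_insert_of_notMem hni (Set.toFinite _)).symm
    have hle : (insert i W).ncard ≤ Set.ncard { k : Fin n | k < i' ∧ y ∈ Icc (lo k) (hi k) ∧ ℓ k ≤ ℓ i' } :=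
      Set.ncard_le_ncard hsub (Set.toFinite _)
    omega
  · -- i' < i : use constraint of i at y
    have hcon : Set.ncard { k : Fin n | k < i ∧ y ∈ Icc (lo k) (hi k) ∧ ℓ k ≤ ℓ i } ≤ ℓ i - 1 :=
      (hℓ i).1.2 y hy
    have hni : i' ∉ W := fun hw' => by
      have := hw'.2.2; omega
    have hsub : insert i' W ⊆ { k : Fin n | k < i ∧ y ∈ Icc (lo k) (hi k) ∧ ℓ k ≤ ℓ i } := by
      rintro k (rfl | ⟨hk, hyk, hlk⟩)
      · exact ⟨h, hy', by omega⟩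
      · exact ⟨hk, hyk, by omega⟩
    have hcard : W.ncard + 1 = (insert i' W).ncard :=
      (Set.ncard_insert_of_notMem hni (Set.toFinite _)).symm
    have hle : (insert i' W).ncard ≤ Set.ncard { k : Fin n | k < i ∧ y ∈ Icc (lo k) (hi k) ∧ ℓ k ≤ ℓ i } :=
      Set.ncard_le_ncard hsub (Set.toFinite _)
    omega

lemma side_contra {l1 h1 l2 h2 x y1 y2 : ℝ}
    (hx1 : x ∈ Icc l1 h1) (hx2 : x ∈ Icc l2 h2)
    (hy1 : y1 ∈ Icc l1 h1) (hy1' : y1 ∉ Icc l2 h2)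
    (hy2 : y2 ∈ Icc l2 h2) (hy2' : y2 ∉ Icc l1 h1)
    (s1 : x ≤ y1) (s2 : x ≤ y2) : False := by
  rcases le_total y1 y2 with h | h
  · exact hy1' ⟨hx2.1.trans s1, h.trans hy2.2⟩
  · exact hy2' ⟨hx1.1.trans s2, h.trans hy1.2⟩

lemma side_contra' {l1 h1 l2 h2 x y1 y2 : ℝ}
    (hx1 : x ∈ Icc l1 h1) (hx2 : x ∈ Icc l2 h2)
    (hy1 : y1 ∈ Icc l1 h1) (hy1' : y1 ∉ Icc l2 h2)
    (hy2 : y2 ∈ Icc l2 h2) (hy2' : y2 ∉ Icc l1 h1)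
    (s1 : y1 ≤ x) (s2 : y2 ≤ x) : False := by
  rcases le_total y1 y2 with h | h
  · exact hy2' ⟨hy1.1.trans h, s2.trans hx1.2⟩
  · exact hy1' ⟨hy2.1.trans h, s1.trans hx2.2⟩

lemma kt_no_three (hℓ : IsKTLevel (fun i => Icc (lo i) (hi i)) ℓ) {a b d : Fin n}
    (hab : a ≠ b) (had : a ≠ d) (hbd : b ≠ d)
    (hlab : ℓ b = ℓ a) (hlad : ℓ d = ℓ a) (h2 : 2 ≤ ℓ a) {x : ℝ}
    (hxa : x ∈ Icc (lo a) (hi a)) (hxb : x ∈ Icc (lo b) (hi b))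
    (hxd : x ∈ Icc (lo d) (hi d)) : False := by
  obtain ⟨ya, hya, hwa⟩ := kt_witness_s12 hℓ a h2
  obtain ⟨yb, hyb, hwb⟩ := kt_witness_s12 hℓ b (by omega)
  obtain ⟨yd, hyd, hwd⟩ := kt_witness_s12 hℓ d (by omega)
  have hAB : ya ∉ Icc (lo b) (hi b) := kt_private hℓ hab hlab h2 hya hwa
  have hAD : ya ∉ Icc (lo d) (hi d) := kt_private hℓ had hlad h2 hya hwa
  have hBA : yb ∉ Icc (lo a) (hi a) :=
    kt_private hℓ (Ne.symm hab) hlab.symm (by omega) hyb hwb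
  have hBD : yb ∉ Icc (lo d) (hi d) :=
    kt_private hℓ hbd (by omega) (by omega) hyb hwb
  have hDA : yd ∉ Icc (lo a) (hi a) :=
    kt_private hℓ (Ne.symm had) hlad.symm (by omega) hyd hwd
  have hDB : yd ∉ Icc (lo b) (hi b) :=
    kt_private hℓ (Ne.symm hbd) (by omega) (by omega) hyd hwd
  rcases le_total x ya with sa | sa <;> rcases le_total x yb with sb | sb <;>
    rcases le_total x yd with sd | sd
  · exact side_contra hxa hxb hya hAB hyb hBA sa sb
  · exact side_contra hxa hxb hya hAB hyb hBA sa sb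
  · exact side_contra hxa hxd hya hAD hyd hDA sa sd
  · exact side_contra' hxb hxd hyb hBD hyd hDB sb sd
  · exact side_contra hxb hxd hyb hBD hyd hDB sb sd
  · exact side_contra' hxa hxd hya hAD hyd hDA sa sd
  · exact side_contra' hxa hxb hya hAB hyb hBA sa sb
  · exact side_contra' hxa hxb hya hAB hyb hBA sa sb

lemma kt_endpoint (hℓ : IsKTLevel (fun i => Icc (lo i) (hi i)) ℓ) {i k : Fin n}
    (hki : k < i) (hlev : ℓ k = ℓ i) (h2 : 2 ≤ ℓ i)
    (hne : (Icc (lo k) (hi k) ∩ Icc (lo i) (hi i)).Nonempty) :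
    lo i ∈ Icc (lo k) (hi k) ∨ hi i ∈ Icc (lo k) (hi k) := by
  obtain ⟨y, hy, hw⟩ := kt_witness_s12 hℓ k (by omega)
  have hyni : y ∉ Icc (lo i) (hi i) :=
    kt_private hℓ (ne_of_lt hki) hlev.symm (by omega) hy hw
  obtain ⟨z, hzk, hzi⟩ := hne
  rcases lt_or_ge y (lo i) with h | h
  · exact Or.inl ⟨hy.1.trans h.le, hzi.1.trans hzk.2⟩
  · have hby : hi i < y := lt_of_not_ge fun hle => hyni ⟨h, hle⟩
    exact Or.inr ⟨hzk.1.trans hzi.2, hby.le.trans hy.2⟩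

lemma kt_color_le_three (hℓ : IsKTLevel (fun i => Icc (lo i) (hi i)) ℓ)
    (hc : IsKTFirstFit (fun i => Icc (lo i) (hi i)) ℓ c)
    (hint : ∀ i, lo i ≤ hi i) (i : Fin n) (h2 : 2 ≤ ℓ i) : c i ≤ 3 := by
  by_contra hgt
  push_neg at hgt
  have key : ∀ m : ℕ, 1 ≤ m → m ≤ 3 →
      ∃ k : Fin n, k < i ∧ ℓ k = ℓ i ∧
        (Icc (lo k) (hi k) ∩ Icc (lo i) (hi i)).Nonempty ∧ c k = m := by
    intro m hm1 hm3
    by_contra hno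
    push_neg at hno
    have hmem : m ∈ { m : ℕ | 1 ≤ m ∧ ∀ k : Fin n, k < i → ℓ k = ℓ i →
        ((fun i => Icc (lo i) (hi i)) k ∩ (fun i => Icc (lo i) (hi i)) i).Nonempty → c k ≠ m } :=
      ⟨hm1, fun k hk hl hn => hno k hk hl hn⟩
    have := (hc i).2 hmem
    omega
  obtain ⟨k1, hk1, hl1, hn1, hc1⟩ := key 1 (by omega) (by omega)
  obtain ⟨k2, hk2, hl2, hn2, hc2⟩ := key 2 (by omega) (by omega)
  obtain ⟨k3, hk3, hl3, hn3, hc3⟩ := key 3 (by omega) (by omega)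
  have h12 : k1 ≠ k2 := fun h => by rw [h, hc2] at hc1; omega
  have h13 : k1 ≠ k3 := fun h => by rw [h, hc3] at hc1; omega
  have h23 : k2 ≠ k3 := fun h => by rw [h, hc3] at hc2; omega
  have e1 := kt_endpoint hℓ hk1 hl1 h2 hn1
  have e2 := kt_endpoint hℓ hk2 hl2 h2 hn2
  have e3 := kt_endpoint hℓ hk3 hl3 h2 hn3
  have hloi : lo i ∈ Icc (lo i) (hi i) := ⟨le_refl _, hint i⟩
  have hhii : hi i ∈ Icc (lo i) (hi i) := ⟨hint i, le_refl _⟩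
  have tri : ∀ (s t : Fin n), s ≠ t → s < i → t < i → ℓ s = ℓ i → ℓ t = ℓ i →
      ∀ e : ℝ, e ∈ Icc (lo s) (hi s) → e ∈ Icc (lo t) (hi t) →
      e ∈ Icc (lo i) (hi i) → False := by
    intro s t hst hsi hti hls hlt e hes het hei
    exact kt_no_three hℓ hst (ne_of_lt hsi) (ne_of_lt hti)
      (by omega) (by omega) (by omega) hes het hei
  rcases e1 with e1 | e1 <;> rcases e2 with e2 | e2 <;> rcases e3 with e3 | e3
  · exact tri k1 k2 h12 hk1 hk2 hl1 hl2 _ e1 e2 hloi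
  · exact tri k1 k2 h12 hk1 hk2 hl1 hl2 _ e1 e2 hloi
  · exact tri k1 k3 h13 hk1 hk3 hl1 hl3 _ e1 e3 hloi
  · exact tri k2 k3 h23 hk2 hk3 hl2 hl3 _ e2 e3 hhii
  · exact tri k2 k3 h23 hk2 hk3 hl2 hl3 _ e2 e3 hloi
  · exact tri k1 k3 h13 hk1 hk3 hl1 hl3 _ e1 e3 hhii
  · exact tri k1 k2 h12 hk1 hk2 hl1 hl2 _ e1 e2 hhii
  · exact tri k1 k2 h12 hk1 hk2 hl1 hl2 _ e1 e2 hhii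

lemma kt_color_one (hℓ : IsKTLevel (fun i => Icc (lo i) (hi i)) ℓ)
    (hc : IsKTFirstFit (fun i => Icc (lo i) (hi i)) ℓ c)
    (i : Fin n) (h1 : ℓ i = 1) : c i = 1 := by
  have hmem : (1:ℕ) ∈ { m : ℕ | 1 ≤ m ∧ ∀ k : Fin n, k < i → ℓ k = ℓ i →
      ((fun i => Icc (lo i) (hi i)) k ∩ (fun i => Icc (lo i) (hi i)) i).Nonempty → c k ≠ m } := by
    refine ⟨le_refl 1, fun k hk hlk hn => ?_⟩
    exfalso
    obtain ⟨z, hzk, hzi⟩ := hn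
    have hcon : Set.ncard { k' : Fin n | k' < i ∧ z ∈ Icc (lo k') (hi k') ∧ ℓ k' ≤ ℓ i } ≤ ℓ i - 1 :=
      (hℓ i).1.2 z hzi
    have hk' : k ∈ { k' : Fin n | k' < i ∧ z ∈ Icc (lo k') (hi k') ∧ ℓ k' ≤ ℓ i } :=
      ⟨hk, hzk, le_of_eq hlk⟩
    have hpos : 0 < Set.ncard { k' : Fin n | k' < i ∧ z ∈ Icc (lo k') (hi k') ∧ ℓ k' ≤ ℓ i } :=
      (Set.ncard_pos (Set.toFinite _)).mpr ⟨k, hk'⟩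
    omega
  exact le_antisymm ((hc i).2 hmem) (hc i).1.1

end Aux

/-- For any finite sequence of closed intervals presented online with clique
number `ω ≥ 1`, the Kierstead–Trotter algorithm uses at most `3ω - 2`
colors. -/
theorem kt_general_upper_bound (n : ℕ) (lo hi : Fin n → ℝ)
    (hint : ∀ i, lo i ≤ hi i) (ℓ c : Fin n → ℕ)
    (hℓ : IsKTLevel (fun i => Icc (lo i) (hi i)) ℓ)
    (hc : IsKTFirstFit (fun i => Icc (lo i) (hi i)) ℓ c)
    (hω : 1 ≤ cliqueNum (fun i => Icc (lo i) (hi i))) :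
    totalColors ℓ c ≤ 3 * cliqueNum (fun i => Icc (lo i) (hi i)) - 2 := by
  set ω := cliqueNum (fun i => Icc (lo i) (hi i)) with hωdef
  have hBdd : BddAbove { m : ℕ | ∃ x : ℝ, m = Set.ncard { i : Fin n | x ∈ Icc (lo i) (hi i) } } := by
    refine ⟨n, fun m hm => ?_⟩
    obtain ⟨x, rfl⟩ := hm
    calc Set.ncard { i : Fin n | x ∈ Icc (lo i) (hi i) }
        ≤ Set.ncard (Set.univ : Set (Fin n)) :=
          Set.ncard_le_ncard (Set.subset_univ _) (Set.toFinite _)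
      _ = n := by simp [Set.ncard_univ]
  have hcl : ∀ x : ℝ, Set.ncard { i : Fin n | x ∈ Icc (lo i) (hi i) } ≤ ω :=
    fun x => le_csSup hBdd ⟨x, rfl⟩
  have hlev_le : ∀ i, ℓ i ≤ ω := by
    intro i
    refine (hℓ i).2 ⟨hω, fun x hx => ?_⟩
    set A := { k : Fin n | k < i ∧ x ∈ Icc (lo k) (hi k) ∧ ℓ k ≤ ω } with hA
    have hni : i ∉ A := fun h => lt_irrefl i h.1
    have hsub : insert i A ⊆ { k : Fin n | x ∈ Icc (lo k) (hi k) } := by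
      rintro k (rfl | ⟨_, hxk, _⟩)
      · exact hx
      · exact hxk
    have hcard : A.ncard + 1 = (insert i A).ncard :=
      (Set.ncard_insert_of_notMem hni (Set.toFinite _)).symm
    have hle : (insert i A).ncard ≤ Set.ncard { k : Fin n | x ∈ Icc (lo k) (hi k) } :=
      Set.ncard_le_ncard hsub (Set.toFinite _)
    have := hcl x
    omega
  have himg : (Finset.univ.image (fun i : Fin n => (ℓ i, c i))) ⊆
      insert ((1:ℕ),(1:ℕ)) ((Finset.Icc 2 ω) ×ˢ (Finset.Icc 1 3)) := by
    intro p hp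
    simp only [Finset.mem_image, Finset.mem_univ, true_and] at hp
    obtain ⟨i, rfl⟩ := hp
    have h1 : 1 ≤ ℓ i := (hℓ i).1.1
    rcases eq_or_lt_of_le h1 with heq | hlt
    · have hci : c i = 1 := kt_color_one hℓ hc i heq.symm
      simp [Finset.mem_insert, ← heq, hci]
    · have h2 : 2 ≤ ℓ i := hlt
      have hc3 : c i ≤ 3 := kt_color_le_three hℓ hc hint i h2
      have hc1 : 1 ≤ c i := (hc i).1.1
      simp only [Finset.mem_insert, Finset.mem_product, Finset.mem_Icc]
      exact Or.inr ⟨⟨h2, hlev_le i⟩, hc1, hc3⟩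
  have hcount := Finset.card_le_card himg
  have hins := Finset.card_insert_le ((1:ℕ),(1:ℕ)) ((Finset.Icc 2 ω) ×ˢ (Finset.Icc 1 3))
  have hprod : ((Finset.Icc 2 ω) ×ˢ (Finset.Icc (1:ℕ) 3)).card = (ω - 1) * 3 := by
    rw [Finset.card_product, Nat.card_Icc, Nat.card_Icc]; omega
  have : totalColors ℓ c = (Finset.univ.image (fun i : Fin n => (ℓ i, c i))).card := rfl
  omega
end
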